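/- arXiv:2002.11021 — 2 statements merged into one kernel-verified Lean document; each statement's English description precedes it below -/
import Mathlib

section
/- Let A, B, b be real numbers with B > 0. Define z = exp(b + A) / (exp(b + A) + B) and z̃ = exp(−b + A) / (exp(−b + A) + B). Then (1/z̃ − 1) / (1/z − 1) > 0, so its natural logarithm is well defined, and moreover b = (1/2) · ln((1/z̃ − 1) / (1/z − 1)). -/
open Real

/-! Flipping the sign of `b` multiplies the odds `z / (1 - z) = exp (b + A) / B` by `exp (-2b)`,
so the ratio of the inverse odds of `z̃` and `z` is exactly `exp (2b)`, whose half-logarithm is `b`. -/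

theorem one_div_div_add_sub_one {K : Type*} [Field K] {e : K} (he : e ≠ 0) (B : K) :
    1 / (e / (e + B)) - 1 = B / e := by
  rw [one_div_div, add_div, div_self he, add_sub_cancel_left]

theorem div_exp_div_div_exp {B : ℝ} (hB : B ≠ 0) (x y : ℝ) :
    B / exp x / (B / exp y) = exp (y - x) := by
  rw [div_div_div_cancel_left' _ _ hB, exp_sub]

/-- SNIFF bias recovery identity: with `z = exp (b + A) / (exp (b + A) + B)` and
`z̃ = exp (-b + A) / (exp (-b + A) + B)` for `B > 0`, the ratio
`(1/z̃ - 1) / (1/z - 1)` is positive (so its logarithm is well defined) and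
`b = (1/2) * log ((1/z̃ - 1) / (1/z - 1))`. -/
theorem sniff_bias_recovery (A B b : ℝ) (hB : 0 < B) :
    0 < (1 / (exp (-b + A) / (exp (-b + A) + B)) - 1) /
          (1 / (exp (b + A) / (exp (b + A) + B)) - 1) ∧
    b = (1 / 2) * Real.log ((1 / (exp (-b + A) / (exp (-b + A) + B)) - 1) /
          (1 / (exp (b + A) / (exp (b + A) + B)) - 1)) := by
  have odds_ratio : (1 / (exp (-b + A) / (exp (-b + A) + B)) - 1) /
      (1 / (exp (b + A) / (exp (b + A) + B)) - 1) = exp (2 * b) := by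
    rw [one_div_div_add_sub_one (exp_ne_zero _), one_div_div_add_sub_one (exp_ne_zero _),
      div_exp_div_div_exp hB.ne']
    ring_nf
  rw [odds_ratio, log_exp]
  exact ⟨exp_pos _, by ring⟩
end

section
/- (Theorem 1, bias recovery.) Let n, m ∈ ℕ with m ≥ 2, let I : Fin n → ℝ be the input to the last layer, let W : Fin n → Fin m → ℝ be the weight matrix and b : Fin m → ℝ the bias vector. For each j define y_j = b_j + Σ_{i=1}^{n} I_i · W_{i,j} and the softmax output z_j = exp(y_j) / Σ_{j'} exp(y_{j'}). Fix j₀ and define the faulted pre-activations ỹ by ỹ_{j₀} = −b_{j₀} + Σ_i I_i · W_{i,j₀} and ỹ_j = y_j for j ≠ j₀, with faulted output z̃_{j₀} = exp(ỹ_{j₀}) / Σ_{j'} exp(ỹ_{j'}). Then b_{j₀} = (1/2) · ln((1/z̃_{j₀} − 1) / (1/z_{j₀} − 1)). -/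
open Real Finset

/-!
The odds `1 / z - 1` of a softmax output are the mass of the other coordinates divided by
`exp y_{j₀}`. The fault changes only `y_{j₀}`, so that mass cancels in the ratio of the faulted
and the correct odds, which is `exp (y_{j₀} - ỹ_{j₀}) = exp (2 b_{j₀})`.
-/

noncomputable def softmax {ι : Type*} [Fintype ι] (y : ι → ℝ) (j : ι) : ℝ :=
  exp (y j) / ∑ k, exp (y k)

section Softmax

variable {ι : Type*} [Fintype ι] [DecidableEq ι]

theorem one_div_softmax_sub_one (y : ι → ℝ) (j : ι) :
    1 / softmax y j - 1 = (∑ k ∈ univ.erase j, exp (y k)) / exp (y j) := by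
  have hj := exp_pos (y j)
  rw [softmax, ← add_sum_erase _ _ (mem_univ j)]
  field_simp
  ring

theorem sum_erase_exp_pos [Nontrivial ι] (y : ι → ℝ) (j : ι) :
    0 < ∑ k ∈ univ.erase j, exp (y k) := by
  obtain ⟨k, hk⟩ := exists_ne j
  exact sum_pos (fun _ _ => exp_pos _) ⟨k, mem_erase.2 ⟨hk, mem_univ k⟩⟩

theorem softmax_odds_ratio_update [Nontrivial ι] (y : ι → ℝ) (j : ι) (t : ℝ) :
    (1 / softmax (Function.update y j t) j - 1) / (1 / softmax y j - 1) = exp (y j - t) := by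
  have hrest : ∑ k ∈ univ.erase j, exp (Function.update y j t k)
      = ∑ k ∈ univ.erase j, exp (y k) :=
    sum_congr rfl fun k hk => by rw [Function.update_of_ne (ne_of_mem_erase hk)]
  have hpos := sum_erase_exp_pos y j
  rw [one_div_softmax_sub_one, one_div_softmax_sub_one, hrest, Function.update_self, exp_sub]
  field_simp

end Softmax

/-- Theorem 1 (bias recovery by SNIFF): the last layer computes pre-activations
`y j = b j + ∑ i, I i * W i j` followed by a softmax; a sign bit flip fault on the
bias `b j₀` replaces `y j₀` by `-b j₀ + ∑ i, I i * W i j₀` (all other coordinates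
unchanged). From the correct output `z` and faulted output `z̃` at coordinate `j₀`,
the targeted bias is recovered as `b j₀ = (1/2) * log ((1/z̃ - 1) / (1/z - 1))`. -/
theorem sniff_bias_recovery_last_layer
    (n m : ℕ) (hm : 2 ≤ m)
    (I : Fin n → ℝ) (W : Fin n → Fin m → ℝ) (b : Fin m → ℝ) (j₀ : Fin m)
    (y : Fin m → ℝ) (hy : ∀ j, y j = b j + ∑ i, I i * W i j)
    (yf : Fin m → ℝ)
    (hyf : yf = Function.update y j₀ (-b j₀ + ∑ i, I i * W i j₀))
    (z zf : ℝ)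
    (hz : z = exp (y j₀) / ∑ j' : Fin m, exp (y j'))
    (hzf : zf = exp (yf j₀) / ∑ j' : Fin m, exp (yf j')) :
    b j₀ = (1 / 2) * Real.log ((1 / zf - 1) / (1 / z - 1)) := by
  have : Nontrivial (Fin m) := Fin.nontrivial_iff_two_le.2 hm
  have hz' : z = softmax y j₀ := hz
  have hzf' : zf = softmax yf j₀ := hzf
  rw [hz', hzf', hyf, softmax_odds_ratio_update, log_exp, hy]
  ring
end
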